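/- arXiv:2007.08347 — 2 statements merged into one kernel-verified Lean document; each statement's English description precedes it below -/
import Mathlib

section
/- Let M = ℤ^n, let P be a commutative monoid with a monoid homomorphism r : P → M, and let 𝔪 be the ideal of non-units of P. Let f be an element of the completion of the monoid algebra k[P] with respect to 𝔪 satisfying f ≡ 1 mod 𝔪. Then there is a unique convergent product expansion f = ∏_{m ∈ M_prim ∪ {0}} f_m, where M_prim is the set of primitive elements of M, each f_m ≡ 1 mod 𝔪, and every monomial z^p appearing in f_m − 1 satisfies r(p) positively proportional to m (or r(p) = 0 when m = 0). -/
/-- `m` is a primitive element of `ℤⁿ`: nonzero and not of the form `j • m'` for `j ≥ 2`. -/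
def IsPrimitiveVec {n : ℕ} (m : Fin n → ℤ) : Prop :=
  m ≠ 0 ∧ ∀ (j : ℕ) (m' : Fin n → ℤ), 2 ≤ j → m ≠ (j : ℤ) • m'

/-- `F` is a directional factorization of the element of the `mP`-adic completion of `k[P]`
represented by the compatible sequence `f`: each `F m` is a compatible sequence (an element of
the completion) which is `≡ 1 mod mP`, all of whose monomials `z^p` (other than the constant
term) have `r p` positively proportional to `m` (or `r p = 0` when `m = 0`); `F m` is trivial
unless `m = 0` or `m` is primitive, and the product of the `F m` converges to `f`: modulo each
power `mP ^ N` only finitely many factors are nontrivial and their product is `≡ f`. -/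
def IsDirectionalFactorization {n : ℕ} (K P : Type) [Field K] [AddCommMonoid P]
    (r : P →+ (Fin n → ℤ)) (mP : Ideal (AddMonoidAlgebra K P))
    (f : ℕ → AddMonoidAlgebra K P) (F : (Fin n → ℤ) → ℕ → AddMonoidAlgebra K P) : Prop :=
  (∀ m N N', N ≤ N' → F m N' - F m N ∈ mP ^ N) ∧
  (∀ m N, F m N - 1 ∈ mP) ∧
  (∀ m N, F m N - 1 ∈ Submodule.span K
      {x | ∃ p : P, x = AddMonoidAlgebra.single p (1 : K) ∧
        (m = 0 → r p = 0) ∧ (m ≠ 0 → ∃ a : ℕ, 0 < a ∧ r p = (a : ℤ) • m)}) ∧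
  (∀ m, ¬ (m = 0 ∨ IsPrimitiveVec m) → ∀ N, F m N - 1 ∈ mP ^ N) ∧
  (∀ N : ℕ, ∃ s : Finset (Fin n → ℤ),
      (∀ m, m ∉ s → F m N - 1 ∈ mP ^ N) ∧
      f N - ∏ m ∈ s, F m N ∈ mP ^ N)

/-!
Sort the monomials `z^p` by the direction of `r p`: `0`, or the primitive vector on the ray
through `r p`. A product of monomials of direction `m` again has direction `m`. A monomial
ideal, and each of its powers, contains every element whose support lies in the support of
one of its elements; in particular it contains the direction-`m` part of each of its
elements.

Existence: suppose `∏ Gₘ ≡ f mod 𝔪^N` with `Gₘ ≡ 1 mod 𝔪`. Split the error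
`e = f - ∏ Gₘ ∈ 𝔪^N` into its directional parts `eₘ` and replace each `Gₘ` by
`Gₘ (1 + eₘ)`. The new product is `≡ ∏ Gₘ + ∑ eₘ = f mod 𝔪^(N+1)`, because every cross term
contains a factor from `𝔪` and a factor from `𝔪^N`.

Uniqueness: suppose two factorizations agree modulo `𝔪^N`. Both products are `≡ f`, so at
level `N + 1` the differences `δₘ` of their factors lie in `𝔪^N` and `∑ δₘ ∈ 𝔪^(N+1)`.
The `δₘ` are supported in distinct directions, so each `δₘ` lies in `𝔪^(N+1)`.
-/

namespace DirectionalFactorization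

section Direction

variable {n : ℕ}

def content (v : Fin n → ℤ) : ℕ := Finset.univ.gcd fun i => (v i).natAbs

lemma content_dvd (v : Fin n → ℤ) (i : Fin n) : (content v : ℤ) ∣ v i :=
  Int.dvd_natAbs.mp (Int.natCast_dvd_natCast.mpr (Finset.gcd_dvd (Finset.mem_univ i)))

lemma content_eq_zero_iff {v : Fin n → ℤ} : content v = 0 ↔ v = 0 := by
  simp [content, Finset.gcd_eq_zero_iff, funext_iff]

lemma content_nsmul (a : ℕ) (v : Fin n → ℤ) : content ((a : ℤ) • v) = a * content v := by
  simp only [content, Pi.smul_apply, smul_eq_mul, Int.natAbs_mul, Int.natAbs_natCast]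
  rw [Finset.gcd_mul_left, normalize_eq]

/-- `direction 0 = 0`, since `content 0 = 0` and integer division by `0` is `0`. -/
def direction (v : Fin n → ℤ) : Fin n → ℤ := fun i => v i / content v

lemma content_smul_direction (v : Fin n → ℤ) : (content v : ℤ) • direction v = v :=
  funext fun i => Int.mul_ediv_cancel' (content_dvd v i)

lemma content_eq_one_of_isPrimitiveVec {m : Fin n → ℤ} (hm : IsPrimitiveVec m) :
    content m = 1 := by
  have h0 : content m ≠ 0 := mt content_eq_zero_iff.mp hm.1
  by_contra h1
  exact hm.2 (content m) (direction m) (by omega) (content_smul_direction m).symm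

lemma direction_eq_zero_iff {v : Fin n → ℤ} : direction v = 0 ↔ v = 0 := by
  refine ⟨fun h => ?_, fun h => ?_⟩
  · rw [← content_smul_direction v, h, smul_zero]
  · subst h
    funext i
    simp [direction]

lemma isPrimitiveVec_direction {v : Fin n → ℤ} (hv : v ≠ 0) : IsPrimitiveVec (direction v) := by
  refine ⟨mt direction_eq_zero_iff.mp hv, fun j m hj hm => ?_⟩
  have hpos : 0 < content v := Nat.pos_of_ne_zero (mt content_eq_zero_iff.mp hv)
  have hcontent : content v * (j * content m) = content v * 1 := by
    conv_rhs => rw [mul_one, ← content_smul_direction v, hm, smul_smul, ← Nat.cast_mul,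
      content_nsmul, mul_assoc]
  have hj1 : j = 1 := Nat.eq_one_of_mul_eq_one_right (Nat.eq_of_mul_eq_mul_left hpos hcontent)
  omega

lemma direction_nsmul {a : ℕ} (ha : 0 < a) {m : Fin n → ℤ} (hm : IsPrimitiveVec m) :
    direction ((a : ℤ) • m) = m := by
  funext i
  rw [direction, content_nsmul, content_eq_one_of_isPrimitiveVec hm, mul_one, Pi.smul_apply,
    smul_eq_mul, Int.mul_ediv_cancel_left _ (by exact_mod_cast ha.ne')]

lemma direction_eq_zero_or_isPrimitiveVec (v : Fin n → ℤ) :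
    direction v = 0 ∨ IsPrimitiveVec (direction v) := by
  by_cases hv : v = 0
  · exact .inl (direction_eq_zero_iff.mpr hv)
  · exact .inr (isPrimitiveVec_direction hv)

def IsPosMultipleOf (m v : Fin n → ℤ) : Prop :=
  (m = 0 → v = 0) ∧ (m ≠ 0 → ∃ a : ℕ, 0 < a ∧ v = (a : ℤ) • m)

lemma direction_eq_iff {m v : Fin n → ℤ} (hm : m = 0 ∨ IsPrimitiveVec m) :
    direction v = m ↔ IsPosMultipleOf m v := by
  constructor
  · rintro rfl
    refine ⟨direction_eq_zero_iff.mp, fun hd => ?_⟩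
    have hv : v ≠ 0 := mt direction_eq_zero_iff.mpr hd
    exact ⟨content v, Nat.pos_of_ne_zero (mt content_eq_zero_iff.mp hv),
      (content_smul_direction v).symm⟩
  · intro h
    rcases hm with rfl | hm
    · exact direction_eq_zero_iff.mpr (h.1 rfl)
    · obtain ⟨a, ha, rfl⟩ := h.2 hm.1
      exact direction_nsmul ha hm

lemma direction_add {v w m : Fin n → ℤ} (hv : direction v = m) (hw : direction w = m) :
    direction (v + w) = m := by
  have hm : m = 0 ∨ IsPrimitiveVec m := hv ▸ direction_eq_zero_or_isPrimitiveVec v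
  rw [direction_eq_iff hm] at hv hw ⊢
  refine ⟨fun h0 => by rw [hv.1 h0, hw.1 h0, add_zero], fun hm0 => ?_⟩
  obtain ⟨a, ha, rfl⟩ := hv.2 hm0
  obtain ⟨b, hb, rfl⟩ := hw.2 hm0
  exact ⟨a + b, by omega, by push_cast; rw [add_smul]⟩

end Direction

open AddMonoidAlgebra Pointwise

section IdealArith

variable {R ι : Type*} [CommRing R] (I : Ideal R)

lemma prod_sub_one_mem {t : Finset ι} {F : ι → R} (h : ∀ i ∈ t, F i - 1 ∈ I) :
    ∏ i ∈ t, F i - 1 ∈ I := by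
  rw [← Ideal.Quotient.eq, map_prod, map_one]
  exact Finset.prod_eq_one fun i hi => by
    rw [← map_one (Ideal.Quotient.mk I), Ideal.Quotient.eq]
    exact h i hi

lemma prod_sub_prod_sub_sum_mem_mul {J : Ideal R} {t : Finset ι} {F G : ι → R}
    (hF : ∀ i ∈ t, F i - 1 ∈ I) (hG : ∀ i ∈ t, G i - 1 ∈ I) (hGF : ∀ i ∈ t, G i - F i ∈ J) :
    ∏ i ∈ t, G i - ∏ i ∈ t, F i - ∑ i ∈ t, (G i - F i) ∈ I * J := by
  classical
  induction t using Finset.induction with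
  | empty => simp
  | insert a t ha ih =>
    simp only [Finset.mem_insert, forall_eq_or_imp] at hF hG hGF
    rw [Finset.prod_insert ha, Finset.prod_insert ha, Finset.sum_insert ha]
    have hS : ∑ i ∈ t, (G i - F i) ∈ J := Submodule.sum_mem _ hGF.2
    have hA : ∏ i ∈ t, G i - 1 ∈ I := prod_sub_one_mem I hG.2
    have key : G a * ∏ i ∈ t, G i - F a * ∏ i ∈ t, F i - (G a - F a + ∑ i ∈ t, (G i - F i)) =
        F a * (∏ i ∈ t, G i - ∏ i ∈ t, F i - ∑ i ∈ t, (G i - F i)) +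
          (F a - 1) * ∑ i ∈ t, (G i - F i) + (∏ i ∈ t, G i - 1) * (G a - F a) := by ring
    rw [key]
    exact add_mem (add_mem (Ideal.mul_mem_left _ _ (ih hF.2 hG.2 hGF.2))
      (Ideal.mul_mem_mul hF.1 hS)) (Ideal.mul_mem_mul hA hGF.1)

lemma sub_prod_mem_of_subset {s t : Finset ι} (hst : s ⊆ t) {F : ι → R} {g : R}
    (hF : ∀ i ∈ t, i ∉ s → F i - 1 ∈ I) (hg : g - ∏ i ∈ s, F i ∈ I) :
    g - ∏ i ∈ t, F i ∈ I := by
  classical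
  have hsd : ∏ i ∈ t \ s, F i - 1 ∈ I :=
    prod_sub_one_mem I fun i hi => hF i (Finset.mem_sdiff.mp hi).1 (Finset.mem_sdiff.mp hi).2
  rw [← Finset.prod_sdiff hst,
    show g - (∏ i ∈ t \ s, F i) * ∏ i ∈ s, F i =
      (g - ∏ i ∈ s, F i) - (∏ i ∈ t \ s, F i - 1) * ∏ i ∈ s, F i by ring]
  exact sub_mem hg (Ideal.mul_mem_right _ _ hsd)

lemma sub_mem_pow_of_forall_succ {g : ℕ → R} (h : ∀ N, g (N + 1) - g N ∈ I ^ N) {N N' : ℕ}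
    (hNN' : N ≤ N') : g N' - g N ∈ I ^ N := by
  induction N', hNN' using Nat.le_induction with
  | base => simp
  | succ N' hle ih =>
    rw [← sub_add_sub_cancel]
    exact add_mem (Ideal.pow_le_pow_right hle (h N')) ih

end IdealArith

section Filter

variable {k A ι : Type*} [CommRing k]

noncomputable def filter (c : A → Prop) [DecidablePred c] (x : k[A]) : k[A] :=
  ofCoeff (x.coeff.filter c)

lemma support_filter_subset (c : A → Prop) [DecidablePred c] (x : k[A]) :
    (filter c x).coeff.support ⊆ x.coeff.support :=
  Finset.filter_subset _ _

lemma filter_mem_supported (c : A → Prop) [DecidablePred c] (x : k[A]) :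
    filter c x ∈ supported k k {p | c p} := fun _ hp => (Finset.mem_filter.mp hp).2

lemma filter_eq_zero {c : A → Prop} [DecidablePred c] {x : k[A]}
    (h : ∀ p ∈ x.coeff.support, ¬ c p) : filter c x = 0 := by
  rw [filter, (Finsupp.filter_eq_zero_iff c x.coeff).mpr fun p hc => by_contra fun hp =>
    h p (Finsupp.mem_support_iff.mpr hp) hc, ofCoeff_zero]

lemma sum_filter_fiberwise [DecidableEq ι] (g : A → ι) {x : k[A]} {t : Finset ι}
    (h : ∀ p ∈ x.coeff.support, g p ∈ t) : ∑ i ∈ t, filter (fun p => g p = i) x = x := by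
  rw [← coeff_inj, coeff_sum]
  simp only [filter, coeff_ofCoeff, Finsupp.filter_eq_sum]
  rw [Finset.sum_fiberwise_of_maps_to h]
  exact x.coeff.sum_single

lemma span_setOf_single_eq_supported [AddCommMonoid A] (Q : A → Prop) :
    Submodule.span k {x : k[A] | ∃ p, x = single p 1 ∧ Q p} = supported k k {p | Q p} := by
  rw [supported_eq_span_single]
  congr 1
  ext x
  simp [eq_comm, and_comm]

lemma mul_mem_supported [AddCommMonoid A] {S : Set A} (hS : ∀ a ∈ S, ∀ b ∈ S, a + b ∈ S)
    {x y : k[A]} (hx : x ∈ supported k k S) (hy : y ∈ supported k k S) :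
    x * y ∈ supported k k S := by
  classical
  intro p hp
  obtain ⟨a, ha, b, hb, rfl⟩ := Finset.mem_add.mp (support_coeff_mul_subset x y hp)
  exact hS a (hx ha) b (hy hb)

end Filter

section MonomialIdeal

variable {k A : Type*} [CommRing k] [AddCommMonoid A]

lemma span_of'_image_mul_span_of'_image (S T : Set A) :
    Ideal.span (of' k A '' S) * Ideal.span (of' k A '' T) = Ideal.span (of' k A '' (S + T)) := by
  rw [Ideal.span_mul_span', ← Set.image2_mul, Set.image2_image_left, Set.image2_image_right,
    ← Set.image2_add, Set.image_image2]
  simp only [of'_apply, single_mul_single, one_mul]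

lemma exists_span_of'_image_pow_eq (S : Set A) (N : ℕ) :
    ∃ T : Set A, Ideal.span (of' k A '' S) ^ N = Ideal.span (of' k A '' T) := by
  induction N with
  | zero => exact ⟨{0}, by simp [of'_apply, ← one_def]⟩
  | succ N ih =>
    obtain ⟨T, hT⟩ := ih
    exact ⟨T + S, by rw [pow_succ, hT, span_of'_image_mul_span_of'_image]⟩

lemma mem_span_of'_image_pow_of_support_subset {S : Set A} {N : ℕ} {x y : k[A]}
    (hx : x ∈ Ideal.span (of' k A '' S) ^ N) (hyx : y.coeff.support ⊆ x.coeff.support) :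
    y ∈ Ideal.span (of' k A '' S) ^ N := by
  obtain ⟨T, hT⟩ := exists_span_of'_image_pow_eq (k := k) S N
  rw [hT, mem_ideal_span_of'_image] at hx ⊢
  exact fun p hp => hx p (hyx hp)

lemma mem_span_of'_image_pow_of_sum_mem {ι : Type*} {S : Set A} {N : ℕ} (g : A → ι)
    {t : Finset ι} {x : ι → k[A]} (hx : ∀ i ∈ t, x i ∈ supported k k (g ⁻¹' {i}))
    (hsum : ∑ i ∈ t, x i ∈ Ideal.span (of' k A '' S) ^ N) {i : ι} (hi : i ∈ t) :
    x i ∈ Ideal.span (of' k A '' S) ^ N := by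
  refine mem_span_of'_image_pow_of_support_subset hsum fun p hp => ?_
  have hgp : g p = i := hx i hi hp
  rw [Finsupp.mem_support_iff, coeff_sum, Finsupp.finsetSum_apply,
    Finset.sum_eq_single_of_mem i hi fun j hj hji => ?_]
  · exact Finsupp.mem_support_iff.mp hp
  · exact mem_supported'.mp (hx j hj) p (by simpa [hgp] using hji.symm)

lemma filter_mem_span_of'_image_pow {S : Set A} {N : ℕ} {x : k[A]}
    (hx : x ∈ Ideal.span (of' k A '' S) ^ N) (c : A → Prop) [DecidablePred c] :
    filter c x ∈ Ideal.span (of' k A '' S) ^ N :=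
  mem_span_of'_image_pow_of_support_subset hx (support_filter_subset c x)

end MonomialIdeal

section Construction

variable {k A ι : Type*} [CommRing k] [AddCommMonoid A] (cl : A → ι)

structure IsPartialFactorization (I : Ideal k[A]) (g : k[A]) (N : ℕ) (s : Finset ι)
    (G : ι → k[A]) : Prop where
  eq_one_of_notMem : ∀ i ∉ s, G i = 1
  sub_one_mem_supported : ∀ i, G i - 1 ∈ supported k k (cl ⁻¹' {i})
  sub_one_mem : ∀ i, G i - 1 ∈ I
  sub_prod_mem_pow : g - ∏ i ∈ s, G i ∈ I ^ N

variable {cl} {S : Set A} {g g' : k[A]} {N : ℕ} {s : Finset ι} {G : ι → k[A]}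

lemma IsPartialFactorization.sub_prod_mem_pow_of_sub_mem
    (h : IsPartialFactorization cl (Ideal.span (of' k A '' S)) g N s G)
    (hg' : g' - g ∈ Ideal.span (of' k A '' S) ^ N) :
    g' - ∏ i ∈ s, G i ∈ Ideal.span (of' k A '' S) ^ N := by
  rw [← sub_add_sub_cancel g' g]
  exact add_mem hg' h.sub_prod_mem_pow

lemma IsPartialFactorization.sub_prod_mem_of_sub_one_mem
    (h : IsPartialFactorization cl (Ideal.span (of' k A '' S)) g N s G)
    (hg'1 : g' - 1 ∈ Ideal.span (of' k A '' S)) :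
    g' - ∏ i ∈ s, G i ∈ Ideal.span (of' k A '' S) := by
  rw [show g' - ∏ i ∈ s, G i = (g' - 1) - (∏ i ∈ s, G i - 1) by ring]
  exact sub_mem hg'1 (prod_sub_one_mem _ fun i _ => h.sub_one_mem i)

variable [DecidableEq ι]

variable (cl) in
noncomputable def refineFactors (g : k[A]) (s : Finset ι) (G : ι → k[A]) :
    Finset ι × (ι → k[A]) :=
  (s ∪ (g - ∏ i ∈ s, G i).coeff.support.image cl,
    fun i => G i * (1 + filter (fun p => cl p = i) (g - ∏ i ∈ s, G i)))

lemma refineFactors_snd_sub_mem_pow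
    (h : IsPartialFactorization cl (Ideal.span (of' k A '' S)) g N s G)
    (hg' : g' - g ∈ Ideal.span (of' k A '' S) ^ N) (i : ι) :
    (refineFactors cl g' s G).2 i - G i ∈ Ideal.span (of' k A '' S) ^ N := by
  rw [refineFactors, show ∀ a b : k[A], a * (1 + b) - a = a * b by intros; ring]
  exact Ideal.mul_mem_left _ _
    (filter_mem_span_of'_image_pow (h.sub_prod_mem_pow_of_sub_mem hg') _)

lemma refineFactors_snd_sub_one_mem
    (h : IsPartialFactorization cl (Ideal.span (of' k A '' S)) g N s G)
    (hg'1 : g' - 1 ∈ Ideal.span (of' k A '' S)) (i : ι) :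
    (refineFactors cl g' s G).2 i - 1 ∈ Ideal.span (of' k A '' S) := by
  rw [refineFactors, show ∀ a b : k[A], a * (1 + b) - 1 = (a - 1) + a * b by intros; ring]
  refine add_mem (h.sub_one_mem i) (Ideal.mul_mem_left _ _ ?_)
  have := filter_mem_span_of'_image_pow (N := 1)
    (by rw [pow_one]; exact h.sub_prod_mem_of_sub_one_mem hg'1) (fun p => cl p = i)
  rwa [pow_one] at this

lemma refineFactors_snd_sub_one_mem_supported
    (hcl : ∀ a b, cl a = cl b → cl (a + b) = cl a)
    (h : IsPartialFactorization cl (Ideal.span (of' k A '' S)) g N s G) (i : ι) :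
    (refineFactors cl g' s G).2 i - 1 ∈ supported k k (cl ⁻¹' {i}) := by
  have hfib : ∀ a ∈ cl ⁻¹' {i}, ∀ b ∈ cl ⁻¹' {i}, a + b ∈ cl ⁻¹' {i} := fun a ha b hb =>
    (hcl a b (ha.trans hb.symm)).trans ha
  have hG := h.sub_one_mem_supported i
  have he := filter_mem_supported (k := k) (fun p => cl p = i) (g' - ∏ i ∈ s, G i)
  rw [refineFactors, show ∀ a b : k[A], a * (1 + b) - 1 = (a - 1) + b + (a - 1) * b by
    intros; ring]
  exact add_mem (add_mem hG he) (mul_mem_supported hfib hG he)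

lemma refineFactors_snd_eq_one
    (h : IsPartialFactorization cl (Ideal.span (of' k A '' S)) g N s G) {i : ι}
    (hi : i ∉ (refineFactors cl g' s G).1) : (refineFactors cl g' s G).2 i = 1 := by
  obtain ⟨his, hie⟩ := Finset.notMem_union.mp hi
  have : filter (fun p => cl p = i) (g' - ∏ i ∈ s, G i) = 0 :=
    filter_eq_zero fun p hp hpi => hie (hpi ▸ Finset.mem_image_of_mem cl hp)
  dsimp only [refineFactors]
  rw [h.eq_one_of_notMem i his, this, add_zero, one_mul]

lemma IsPartialFactorization.sub_prod_refineFactors_mem_pow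
    (h : IsPartialFactorization cl (Ideal.span (of' k A '' S)) g N s G)
    (hg' : g' - g ∈ Ideal.span (of' k A '' S) ^ N)
    (hg'1 : g' - 1 ∈ Ideal.span (of' k A '' S)) :
    g' - ∏ i ∈ (refineFactors cl g' s G).1, (refineFactors cl g' s G).2 i ∈
      Ideal.span (of' k A '' S) ^ (N + 1) := by
  set I := Ideal.span (of' k A '' S)
  set e := g' - ∏ i ∈ s, G i with he
  set t := s ∪ e.coeff.support.image cl
  set eᵢ := fun i => filter (fun p => cl p = i) e
  have heᵢ : ∀ i, eᵢ i ∈ I ^ N := fun i =>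
    filter_mem_span_of'_image_pow (h.sub_prod_mem_pow_of_sub_mem hg') _
  have hprod : ∏ i ∈ t, G i = ∏ i ∈ s, G i :=
    (Finset.prod_subset Finset.subset_union_left fun i _ hi => h.eq_one_of_notMem i hi).symm
  have hsum : ∑ i ∈ t, (G i * (1 + eᵢ i) - G i) = ∑ i ∈ t, (G i - 1) * eᵢ i + e := by
    rw [← sum_filter_fiberwise cl (t := t) fun p hp =>
      Finset.mem_union_right _ (Finset.mem_image_of_mem cl hp), ← Finset.sum_add_distrib]
    exact Finset.sum_congr rfl fun i _ => by ring
  have hexp := prod_sub_prod_sub_sum_mem_mul I (t := t) (fun i _ => h.sub_one_mem i)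
    (fun i _ => refineFactors_snd_sub_one_mem h hg'1 i) (J := I ^ N) fun i _ =>
      refineFactors_snd_sub_mem_pow h hg' i
  have hquad : ∑ i ∈ t, (G i - 1) * eᵢ i ∈ I ^ (N + 1) := sum_mem fun i _ =>
    pow_succ' I N ▸ Ideal.mul_mem_mul (h.sub_one_mem i) (heᵢ i)
  change g' - ∏ i ∈ t, G i * (1 + eᵢ i) ∈ I ^ (N + 1)
  change ∏ i ∈ t, G i * (1 + eᵢ i) - ∏ i ∈ t, G i - ∑ i ∈ t, (G i * (1 + eᵢ i) - G i) ∈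
    I * I ^ N at hexp
  rw [← pow_succ', hsum, hprod] at hexp
  rw [show g' - ∏ i ∈ t, G i * (1 + eᵢ i) = -(∏ i ∈ t, G i * (1 + eᵢ i) - ∏ i ∈ s, G i -
      (∑ i ∈ t, (G i - 1) * eᵢ i + e)) - ∑ i ∈ t, (G i - 1) * eᵢ i by rw [he]; ring]
  exact sub_mem (neg_mem hexp) hquad

lemma IsPartialFactorization.refineFactors
    (hcl : ∀ a b, cl a = cl b → cl (a + b) = cl a)
    (h : IsPartialFactorization cl (Ideal.span (of' k A '' S)) g N s G)
    (hg' : g' - g ∈ Ideal.span (of' k A '' S) ^ N)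
    (hg'1 : g' - 1 ∈ Ideal.span (of' k A '' S)) :
    IsPartialFactorization cl (Ideal.span (of' k A '' S)) g' (N + 1)
      (refineFactors cl g' s G).1 (refineFactors cl g' s G).2 :=
  ⟨fun _ => refineFactors_snd_eq_one h, refineFactors_snd_sub_one_mem_supported hcl h,
    refineFactors_snd_sub_one_mem h hg'1, h.sub_prod_refineFactors_mem_pow hg' hg'1⟩

variable (cl) in
noncomputable def partialFactors (f : ℕ → k[A]) : ℕ → Finset ι × (ι → k[A])
  | 0 => (∅, 1)
  | N + 1 => refineFactors cl (f (N + 1)) (partialFactors f N).1 (partialFactors f N).2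

lemma isPartialFactorization_partialFactors
    (hcl : ∀ a b, cl a = cl b → cl (a + b) = cl a) {f : ℕ → k[A]}
    (hf : ∀ N, f (N + 1) - f N ∈ Ideal.span (of' k A '' S) ^ N)
    (hf1 : ∀ N, f N - 1 ∈ Ideal.span (of' k A '' S)) :
    ∀ N, IsPartialFactorization cl (Ideal.span (of' k A '' S)) (f N) N
      (partialFactors cl f N).1 (partialFactors cl f N).2
  | 0 => ⟨fun _ _ => rfl, fun _ => by simp [partialFactors], fun _ => by simp [partialFactors],
      by simp⟩
  | N + 1 =>
    (isPartialFactorization_partialFactors hcl hf hf1 N).refineFactors hcl (hf N) (hf1 (N + 1))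

end Construction

lemma sub_mem_pow_succ_of_prod_sub_prod_mem {k A ι : Type*} [CommRing k] [AddCommMonoid A]
    {cl : A → ι} {S : Set A} {N : ℕ} {t : Finset ι} {F F' : ι → k[A]}
    (hF : ∀ i ∈ t, F i - 1 ∈ Ideal.span (of' k A '' S))
    (hF' : ∀ i ∈ t, F' i - 1 ∈ Ideal.span (of' k A '' S))
    (hFF' : ∀ i ∈ t, F' i - F i ∈ Ideal.span (of' k A '' S) ^ N)
    (hprod : ∏ i ∈ t, F' i - ∏ i ∈ t, F i ∈ Ideal.span (of' k A '' S) ^ (N + 1))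
    (hsupp : ∀ i ∈ t, F' i - F i ∈ supported k k (cl ⁻¹' {i}) ∨
      F' i - F i ∈ Ideal.span (of' k A '' S) ^ (N + 1)) :
    ∀ i ∈ t, F' i - F i ∈ Ideal.span (of' k A '' S) ^ (N + 1) := by
  classical
  set I := Ideal.span (of' k A '' S)
  have hsum : ∑ i ∈ t, (F' i - F i) ∈ I ^ (N + 1) := by
    have hexp := prod_sub_prod_sub_sum_mem_mul I hF hF' hFF'
    rw [← pow_succ'] at hexp
    simpa using sub_mem hprod hexp
  set good := t.filter fun i => F' i - F i ∈ supported k k (cl ⁻¹' {i})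
  have hgood : ∑ i ∈ good, (F' i - F i) ∈ I ^ (N + 1) := by
    rw [← Finset.sum_filter_add_sum_filter_not t
      (fun i => F' i - F i ∈ supported k k (cl ⁻¹' {i}))] at hsum
    refine (add_mem_cancel_right (sum_mem fun i hi => ?_)).mp hsum
    obtain ⟨hit, hi⟩ := Finset.mem_filter.mp hi
    exact (hsupp i hit).resolve_left hi
  intro i hi
  refine (hsupp i hi).elim (fun h => ?_) id
  -- the summands of `hgood` are supported on pairwise disjoint fibres of `cl`
  exact mem_span_of'_image_pow_of_sum_mem cl (fun j hj => (Finset.mem_filter.mp hj).2) hgood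
    (Finset.mem_filter.mpr ⟨hi, h⟩)

section Directional

variable {n : ℕ} {K P : Type} [Field K] [AddCommMonoid P] {r : P →+ (Fin n → ℤ)}
  {S : Set P} {f : ℕ → AddMonoidAlgebra K P}

variable (r) in
lemma direction_map_add (a b : P)
    (h : (direction ∘ r) a = (direction ∘ r) b) :
    (direction ∘ r) (a + b) = (direction ∘ r) a := by
  simp only [Function.comp_apply, map_add] at h ⊢
  exact direction_add rfl h.symm

lemma span_isPosMultipleOf_eq_supported {m : Fin n → ℤ} (hm : m = 0 ∨ IsPrimitiveVec m) :
    Submodule.span K {x | ∃ p : P, x = single p 1 ∧ IsPosMultipleOf m (r p)} =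
      supported K K ((direction ∘ r) ⁻¹' {m}) := by
  rw [span_setOf_single_eq_supported]
  congr 1
  ext p
  exact (direction_eq_iff hm).symm

lemma supported_preimage_direction_le (m : Fin n → ℤ) :
    supported K K ((direction ∘ r) ⁻¹' {m}) ≤
      Submodule.span K {x | ∃ p : P, x = single p 1 ∧ IsPosMultipleOf m (r p)} := by
  rw [span_setOf_single_eq_supported]
  refine supported_mono fun p (hp : direction (r p) = m) => ?_
  exact (direction_eq_iff (hp ▸ direction_eq_zero_or_isPrimitiveVec _)).mp hp

lemma supported_preimage_direction_eq_bot {m : Fin n → ℤ}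
    (hm : ¬ (m = 0 ∨ IsPrimitiveVec m)) :
    supported K K ((direction ∘ r) ⁻¹' {m}) = ⊥ := by
  have hempty : (direction ∘ r) ⁻¹' {m} = ∅ :=
    Set.eq_empty_of_forall_notMem fun p (hp : direction (r p) = m) =>
      hm (hp ▸ direction_eq_zero_or_isPrimitiveVec _)
  refine eq_bot_iff.mpr fun x hx => ?_
  rwa [hempty, mem_supported, Set.subset_empty_iff, Finset.coe_eq_empty,
    Finsupp.support_eq_empty, coeff_eq_zero] at hx

variable (r) in
lemma exists_isDirectionalFactorization
    (hf : ∀ N, f (N + 1) - f N ∈ Ideal.span (of' K P '' S) ^ N)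
    (hf1 : ∀ N, f N - 1 ∈ Ideal.span (of' K P '' S)) :
    ∃ F, IsDirectionalFactorization K P r (Ideal.span (of' K P '' S)) f F := by
  have h := isPartialFactorization_partialFactors (direction_map_add r) hf hf1
  refine ⟨fun m N => (partialFactors (direction ∘ r) f N).2 m,
    fun m _ _ =>
      sub_mem_pow_of_forall_succ _ fun N => refineFactors_snd_sub_mem_pow (h N) (hf N) m,
    fun m N => (h N).sub_one_mem m,
    fun m N => supported_preimage_direction_le m ((h N).sub_one_mem_supported m),
    fun m hm N => ?_, fun N => ⟨_, fun m hm => ?_, (h N).sub_prod_mem_pow⟩⟩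
  · have := (h N).sub_one_mem_supported m
    rw [supported_preimage_direction_eq_bot hm, Submodule.mem_bot] at this
    rw [this]
    exact zero_mem _
  · dsimp only
    rw [(h N).eq_one_of_notMem m hm, sub_self]
    exact zero_mem _

lemma _root_.IsDirectionalFactorization.sub_mem_pow
    {F F' : (Fin n → ℤ) → ℕ → AddMonoidAlgebra K P}
    (hF : IsDirectionalFactorization K P r (Ideal.span (of' K P '' S)) f F)
    (hF' : IsDirectionalFactorization K P r (Ideal.span (of' K P '' S)) f F') (N : ℕ) :
    ∀ m, F m N - F' m N ∈ Ideal.span (of' K P '' S) ^ N := by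
  classical
  set I := Ideal.span (of' K P '' S)
  obtain ⟨hcauchy, hsub1, hspan, htriv, hprod⟩ := hF
  obtain ⟨hcauchy', hsub1', hspan', htriv', hprod'⟩ := hF'
  induction N with
  | zero => simp
  | succ N ih =>
    intro m
    obtain ⟨s, hs, hfs⟩ := hprod (N + 1)
    obtain ⟨s', hs', hfs'⟩ := hprod' (N + 1)
    set t := insert m (s ∪ s')
    have hst : s ⊆ t := Finset.subset_union_left.trans (Finset.subset_insert _ _)
    have hs't : s' ⊆ t := Finset.subset_union_right.trans (Finset.subset_insert _ _)
    have hprodt : ∏ i ∈ t, F i (N + 1) - ∏ i ∈ t, F' i (N + 1) ∈ I ^ (N + 1) := by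
      rw [← sub_sub_sub_cancel_left _ _ (f (N + 1))]
      exact sub_mem (sub_prod_mem_of_subset _ hs't (fun i _ hi => hs' i hi) hfs')
        (sub_prod_mem_of_subset _ hst (fun i _ hi => hs i hi) hfs)
    refine sub_mem_pow_succ_of_prod_sub_prod_mem (cl := direction ∘ r)
      (fun i _ => hsub1' i _) (fun i _ => hsub1 i _) (fun i _ => ?_) hprodt (fun i _ => ?_) m
      (Finset.mem_insert_self _ _)
    · rw [show F i (N + 1) - F' i (N + 1) = (F i (N + 1) - F i N) + (F i N - F' i N) -
          (F' i (N + 1) - F' i N) by ring]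
      exact sub_mem (add_mem (hcauchy i _ _ N.le_succ) (ih i)) (hcauchy' i _ _ N.le_succ)
    · rw [← sub_sub_sub_cancel_right _ _ 1]
      by_cases hi : i = 0 ∨ IsPrimitiveVec i
      · refine .inl (sub_mem ?_ ?_) <;> rw [← span_isPosMultipleOf_eq_supported hi]
        exacts [hspan i _, hspan' i _]
      · exact .inr (sub_mem (htriv i hi _) (htriv' i hi _))

end Directional

end DirectionalFactorization

theorem unique_directional_factorization_general {n : ℕ} (K P : Type) [Field K]
    [AddCommMonoid P] (r : P →+ (Fin n → ℤ))
    (mP : Ideal (AddMonoidAlgebra K P))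
    (hmP : mP = Ideal.span {x | ∃ p : P, ¬ IsAddUnit p ∧ x = AddMonoidAlgebra.single p (1 : K)})
    (f : ℕ → AddMonoidAlgebra K P)
    (hf : ∀ N N', N ≤ N' → f N' - f N ∈ mP ^ N)
    (hf1 : ∀ N, f N - 1 ∈ mP) :
    ∃ F : (Fin n → ℤ) → ℕ → AddMonoidAlgebra K P,
      IsDirectionalFactorization K P r mP f F ∧
      ∀ F' : (Fin n → ℤ) → ℕ → AddMonoidAlgebra K P,
        IsDirectionalFactorization K P r mP f F' →
        ∀ m N, F m N - F' m N ∈ mP ^ N := by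
  obtain rfl : mP = Ideal.span (AddMonoidAlgebra.of' K P '' {p | ¬ IsAddUnit p}) := by
    rw [hmP]
    congr 1
    ext x
    simp [AddMonoidAlgebra.of'_apply, eq_comm]
  obtain ⟨F, hF⟩ := DirectionalFactorization.exists_isDirectionalFactorization r
    (fun N => hf N (N + 1) N.le_succ) hf1
  exact ⟨F, hF, fun F' hF' m N => hF.sub_mem_pow hF' N m⟩

/-- Lemma (unique product factorization): if `f` is an element of the completion of `k[P]` with
respect to the ideal `mP` generated by non-unit monomials, and `f ≡ 1 mod mP`, then `f` admits a
product expansion `f = ∏_{m ∈ M_prim ∪ {0}} f_m`, unique in the sense that any two such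
factorizations agree modulo every power of `mP`. -/
theorem unique_directional_factorization {n : ℕ} (K P : Type) [Field K] [CharZero K]
    [AddCommMonoid P] (r : P →+ (Fin n → ℤ))
    (mP : Ideal (AddMonoidAlgebra K P))
    (hmP : mP = Ideal.span {x | ∃ p : P, ¬ IsAddUnit p ∧ x = AddMonoidAlgebra.single p (1 : K)})
    (f : ℕ → AddMonoidAlgebra K P)
    (hf : ∀ N N', N ≤ N' → f N' - f N ∈ mP ^ N)
    (hf1 : ∀ N, f N - 1 ∈ mP) :
    ∃ F : (Fin n → ℤ) → ℕ → AddMonoidAlgebra K P,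
      IsDirectionalFactorization K P r mP f F ∧
      ∀ F' : (Fin n → ℤ) → ℕ → AddMonoidAlgebra K P,
        IsDirectionalFactorization K P r mP f F' →
        ∀ m N, F m N - F' m N ∈ mP ^ N :=
  unique_directional_factorization_general K P r mP hmP f hf hf1
end

section
/- Let T be a tropical hypersurface in M_ℝ = ℝ^n, i.e., a fan whose support is pure dimension n−1 with positive integer weights w_σ on the (n−1)-dimensional cones satisfying the balancing condition. Fix a primitive m₀ ∈ M, an element f₀ of a completed monoid algebra with log f₀ supported on monomials projecting to positive multiples of m₀, and form the associated widget 𝔇_{m₀} of walls (π^{-1}(σ), f₀^{w_σ}). Then for any loop γ around a codimension-two locus π^{-1}(τ) (τ ∈ T of dimension n−2) avoiding the singular locus, the path-ordered product θ_{γ, 𝔇_{m₀}} is the identity automorphism. -/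
/-!
All walls carry powers of the same function `f₀`, and `f₀` is supported on the line `ℤ m₀`,
on which every covector `nᵢ` vanishes; so each crossing fixes `f₀`, and crossings compose by
adding covectors: `θ_{f,n₁} ∘ θ_{f,n₂} = θ_{f,n₁+n₂}`. Since `θ_{f^w,n} = θ_{f,w n}`, the
path-ordered product is `θ_{f₀, Σ wᵢ nᵢ}`, which is the identity by balancing.
-/

open AddMonoidAlgebra

theorem map_val_zpow_of_map_val_eq {A F : Type*} [Monoid A] [FunLike F A A] [MonoidHomClass F A A]
    {φ : F} {u : Aˣ} (hu : φ u = u) (z : ℤ) : φ ↑(u ^ z) = ↑(u ^ z) := by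
  have hmap : Units.map (φ : A →* A) u = u := Units.ext hu
  calc φ ↑(u ^ z) = ↑(Units.map (φ : A →* A) (u ^ z)) := rfl
    _ = ↑(u ^ z) := by rw [map_zpow, hmap]

section WallCrossing

variable {R G : Type*} [CommSemiring R] [AddCommMonoid G]

noncomputable def wallCrossing (f : (AddMonoidAlgebra R G)ˣ) (n : G →+ ℤ) :
    AddMonoidAlgebra R G →ₐ[R] AddMonoidAlgebra R G :=
  lift R (AddMonoidAlgebra R G) G
    ((Units.coeHom _).comp ((zpowersHom _ f).comp n.toMultiplicative) * of R G)

theorem wallCrossing_single (f : (AddMonoidAlgebra R G)ˣ) (n : G →+ ℤ) (m : G) (r : R) :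
    wallCrossing f n (single m r) = ↑(f ^ n m) * single m r := by
  simp only [wallCrossing, lift_single, MonoidHom.mul_apply, MonoidHom.coe_comp,
    Function.comp_apply, Units.coeHom_apply, zpowersHom_apply,
    AddMonoidHom.toMultiplicative_apply_apply, of_apply, toAdd_ofAdd]
  rw [← mul_smul_comm, smul_single', mul_one]

theorem wallCrossing_single_of_eq_zero (f : (AddMonoidAlgebra R G)ˣ) {n : G →+ ℤ} {m : G}
    (hm : n m = 0) (r : R) : wallCrossing f n (single m r) = single m r := by
  rw [wallCrossing_single, hm, zpow_zero, Units.val_one, one_mul]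

theorem wallCrossing_zero (f : (AddMonoidAlgebra R G)ˣ) :
    wallCrossing f 0 = AlgHom.id R (AddMonoidAlgebra R G) :=
  algHom_ext (fun _ => wallCrossing_single_of_eq_zero f rfl 1) (Subsingleton.elim _ _)

theorem wallCrossing_pow (f : (AddMonoidAlgebra R G)ˣ) (k : ℕ) (n : G →+ ℤ) :
    wallCrossing (f ^ k) n = wallCrossing f (k • n) :=
  algHom_ext (fun m => by
    rw [wallCrossing_single, wallCrossing_single, AddMonoidHom.smul_apply, ← zpow_natCast,
      ← zpow_mul, nsmul_eq_mul]) (Subsingleton.elim _ _)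

theorem wallCrossing_comp {f : (AddMonoidAlgebra R G)ˣ} {n₁ : G →+ ℤ}
    (hf : wallCrossing f n₁ f = f) (n₂ : G →+ ℤ) :
    (wallCrossing f n₁).comp (wallCrossing f n₂) = wallCrossing f (n₁ + n₂) :=
  algHom_ext (fun m => by
    rw [AlgHom.comp_apply, wallCrossing_single, map_mul, map_val_zpow_of_map_val_eq hf,
      wallCrossing_single, ← mul_assoc, ← Units.val_mul, ← zpow_add, add_comm,
      wallCrossing_single, AddMonoidHom.add_apply]) (Subsingleton.elim _ _)

theorem foldr_comp_ofFn_wallCrossing {f : (AddMonoidAlgebra R G)ˣ} {p : ℕ}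
    {n : Fin p → G →+ ℤ} (hf : ∀ i, wallCrossing f (n i) f = f) :
    (List.ofFn fun i => wallCrossing f (n i)).foldr AlgHom.comp (AlgHom.id R _)
      = wallCrossing f (∑ i, n i) := by
  induction p with
  | zero => simp [wallCrossing_zero]
  | succ p ih =>
    rw [List.ofFn_succ, List.foldr_cons, ih fun i => hf i.succ, wallCrossing_comp (hf 0),
      Fin.sum_univ_succ]

end WallCrossing

theorem widget_path_ordered_product_eq_id_general (R : Type) [CommRing R] (d p : ℕ)
    (m₀ : Fin d → ℤ)
    (F : (AddMonoidAlgebra R (Fin d → ℤ))ˣ)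
    (hF : ∃ (K : ℕ) (c : ℕ → R),
      (F : AddMonoidAlgebra R (Fin d → ℤ)) =
        ∑ a ∈ Finset.range K, AddMonoidAlgebra.single ((a : ℤ) • m₀) (c a))
    (w : Fin p → ℕ)
    (nn : Fin p → ((Fin d → ℤ) →+ ℤ))
    (hperp : ∀ i, nn i m₀ = 0)
    (hbal : ∀ m : Fin d → ℤ, ∑ i, (w i : ℤ) * nn i m = 0) :
    (List.ofFn (fun i : Fin p =>
      (AddMonoidAlgebra.lift R (AddMonoidAlgebra R (Fin d → ℤ)) (Fin d → ℤ))
        (((Units.coeHom (AddMonoidAlgebra R (Fin d → ℤ))).comp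
            ((zpowersHom (AddMonoidAlgebra R (Fin d → ℤ))ˣ (F ^ (w i))).comp
              (AddMonoidHom.toMultiplicative (nn i)))) *
          AddMonoidAlgebra.of R (Fin d → ℤ)))).foldr
        AlgHom.comp (AlgHom.id R (AddMonoidAlgebra R (Fin d → ℤ)))
      = AlgHom.id R (AddMonoidAlgebra R (Fin d → ℤ)) := by
  obtain ⟨K, c, hc⟩ := hF
  have hker : ∀ i (a : ℕ), (w i • nn i) ((a : ℤ) • m₀) = 0 := fun i a => by
    rw [AddMonoidHom.smul_apply, map_zsmul, hperp, smul_zero, smul_zero]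
  have hfix : ∀ i, wallCrossing F (w i • nn i) F = F := fun i => by
    rw [hc, map_sum]
    exact Finset.sum_congr rfl fun a _ => wallCrossing_single_of_eq_zero F (hker i a) (c a)
  have hsum : ∑ i, w i • nn i = 0 :=
    AddMonoidHom.ext fun m => by simpa [nsmul_eq_mul] using hbal m
  change (List.ofFn fun i => wallCrossing (F ^ w i) (nn i)).foldr AlgHom.comp (AlgHom.id R _) = _
  simp only [wallCrossing_pow]
  rw [foldr_comp_ofFn_wallCrossing hfix, hsum, wallCrossing_zero]

/-- Widget consistency (Lemma `widgetlemma`): consider the widget associated to a tropical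
hypersurface: the walls containing the codimension-two locus `π⁻¹(τ)` are
`π⁻¹(σ₁), …, π⁻¹(σ_p)`, carrying wall functions `f₀^{w_i}`, where `f₀` is supported on
monomials `z^{a·m₀}` (a power series in `z^{m₀}`), the primitive covectors `n_i` annihilate
`m₀`, and the balancing condition `Σ_i w_i n_i = 0` holds.  Each wall crossing is the algebra
automorphism `z^m ↦ (f₀^{w_i})^{⟨n_i, m⟩} z^m` of the group algebra `R[ℤ^d]`, and the
path-ordered product of all the crossings around a loop `γ` about `π⁻¹(τ)` is the identity. -/
theorem widget_path_ordered_product_eq_id (R : Type) [CommRing R] (d p : ℕ)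
    (m₀ : Fin d → ℤ)
    (F : (AddMonoidAlgebra R (Fin d → ℤ))ˣ)
    (hF : ∃ (K : ℕ) (c : ℕ → R),
      (F : AddMonoidAlgebra R (Fin d → ℤ)) =
        ∑ a ∈ Finset.range K, AddMonoidAlgebra.single ((a : ℤ) • m₀) (c a))
    (w : Fin p → ℕ) (hw : ∀ i, 0 < w i)
    (nn : Fin p → ((Fin d → ℤ) →+ ℤ))
    (hperp : ∀ i, nn i m₀ = 0)
    (hbal : ∀ m : Fin d → ℤ, ∑ i, (w i : ℤ) * nn i m = 0) :
    (List.ofFn (fun i : Fin p =>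
      (AddMonoidAlgebra.lift R (AddMonoidAlgebra R (Fin d → ℤ)) (Fin d → ℤ))
        (((Units.coeHom (AddMonoidAlgebra R (Fin d → ℤ))).comp
            ((zpowersHom (AddMonoidAlgebra R (Fin d → ℤ))ˣ (F ^ (w i))).comp
              (AddMonoidHom.toMultiplicative (nn i)))) *
          AddMonoidAlgebra.of R (Fin d → ℤ)))).foldr
        AlgHom.comp (AlgHom.id R (AddMonoidAlgebra R (Fin d → ℤ)))
      = AlgHom.id R (AddMonoidAlgebra R (Fin d → ℤ)) :=
  widget_path_ordered_product_eq_id_general R d p m₀ F hF w nn hperp hbal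
end
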